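/- arXiv:1507.02904 — 3 statements merged into one kernel-verified Lean document; each statement's English description precedes it below -/
import Mathlib

section
/- Let Y be a Gaussian random variable in a separable Hilbert space H with mean m and covariance operator Σ having eigenexpansion Σ = Σ_{i≥1} λ_i Ψ_i⊗Ψ_i, and let σ > 0. Then for every y ∈ H, E exp(−σ‖Y − y‖²) = Π_{i≥1}(1 + 2σλ_i)^{−1/2} · exp(−σ Σ_{i≥1} ⟨m − y, Ψ_i⟩² / (1 + 2σλ_i)), i.e. it equals |I + 2σΣ|^{−1/2} exp(−σ‖(I + 2σΣ)^{−1/2}(y − m)‖²). -/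
/-!
By Parseval, `exp (-σ‖Y - y‖²)` is the limit of the partial products
`∏_{i<n} exp (-σ⟪Y - y, Ψᵢ⟫²)`, all bounded by `1`. The coordinates `⟪Y, Ψᵢ⟫` are independent
`N(⟪m, Ψᵢ⟫, λᵢ)`, so the expectation of a partial product factors into one-dimensional Gaussian
integrals, computed by completing the square, and dominated convergence passes to the limit.
Summability of the `λᵢ` makes `∏ᵢ (1 + 2σλᵢ)^{-1/2}` converge.
-/

open MeasureTheory ProbabilityTheory Filter Topology Finset Real
open scoped NNReal

namespace Real

lemma multipliable_one_add_rpow {ι : Type*} {f : ι → ℝ} (hf : Summable f)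
    (hpos : ∀ i, 0 < 1 + f i) (p : ℝ) : Multipliable fun i ↦ (1 + f i) ^ p :=
  multipliable_of_summable_log (fun i ↦ rpow_pos_of_pos (hpos i) p) <|
    ((summable_log_one_add_of_summable hf).mul_left p).congr fun i ↦ (log_rpow (hpos i) p).symm

end Real

lemma HilbertBasis.hasSum_inner_sq {ι E : Type*} [NormedAddCommGroup E] [InnerProductSpace ℝ E]
    (b : HilbertBasis ι ℝ E) (x : E) : HasSum (fun i ↦ inner ℝ x (b i) ^ 2) (‖x‖ ^ 2) := by
  simpa only [sq, real_inner_comm x, real_inner_self_eq_norm_sq] using b.hasSum_inner_mul_inner x x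

namespace ProbabilityTheory

lemma integral_exp_neg_mul_sq_gaussianReal {σ : ℝ} (a : ℝ) {v : ℝ≥0}
    (hσv : 0 < 1 + 2 * σ * v) :
    ∫ t, exp (-σ * t ^ 2) ∂gaussianReal a v
      = (1 + 2 * σ * v) ^ (-(1 : ℝ) / 2) * exp (-σ * a ^ 2 / (1 + 2 * σ * v)) := by
  rcases eq_or_ne v 0 with rfl | hv
  · simp [gaussianReal_zero_var]
  set w := 1 + 2 * σ * v
  have hquad : ∀ t, -(t - a) ^ 2 / (2 * v) + -σ * t ^ 2
      = -σ * a ^ 2 / w + -(w / (2 * v)) * (t - a / w) ^ 2 := fun t ↦ by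
    field_simp
    ring
  calc ∫ t, exp (-σ * t ^ 2) ∂gaussianReal a v
      = ∫ t, (√(2 * π * v))⁻¹ * exp (-σ * a ^ 2 / w) * exp (-(w / (2 * v)) * (t - a / w) ^ 2) := by
        rw [integral_gaussianReal_eq_integral_smul hv]
        congr with t
        rw [gaussianPDFReal, smul_eq_mul, mul_assoc, ← exp_add, hquad, exp_add, ← mul_assoc]
    _ = (√(2 * π * v))⁻¹ * exp (-σ * a ^ 2 / w) * √(π / (w / (2 * v))) := by
        rw [integral_const_mul, integral_sub_right_eq_self (fun t ↦ exp (-(w / (2 * v)) * t ^ 2)),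
          integral_gaussian]
    _ = w ^ (-(1 : ℝ) / 2) * exp (-σ * a ^ 2 / w) := by
        rw [neg_div, rpow_neg hσv.le, ← sqrt_eq_rpow, div_div_eq_mul_div, mul_comm π,
          sqrt_div (by positivity), mul_right_comm 2]
        field_simp

lemma integral_exp_neg_mul_sq_sub_gaussianReal {σ : ℝ} (a c : ℝ) {v : ℝ≥0}
    (hσv : 0 < 1 + 2 * σ * v) :
    ∫ t, exp (-σ * (t - c) ^ 2) ∂gaussianReal a v
      = (1 + 2 * σ * v) ^ (-(1 : ℝ) / 2) * exp (-σ * (a - c) ^ 2 / (1 + 2 * σ * v)) := by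
  rw [← integral_exp_neg_mul_sq_gaussianReal (a - c) hσv, ← gaussianReal_map_sub_const c,
    integral_map (by fun_prop) (by fun_prop)]

section Independence

variable {Ω 𝕜 : Type*} [RCLike 𝕜] {mΩ : MeasurableSpace Ω} {μ : Measure Ω}
  {β : ℕ → Type*} {mβ : ∀ i, MeasurableSpace (β i)} {X : (i : ℕ) → Ω → β i} {f : (i : ℕ) → β i → 𝕜}

lemma iIndepFun.integral_finset_prod_comp (hX : iIndepFun X μ) (mX : ∀ i, AEMeasurable (X i) μ)
    (hf : ∀ i, AEStronglyMeasurable (f i) (μ.map (X i))) (s : Finset ℕ) :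
    ∫ ω, ∏ i ∈ s, f i (X i ω) ∂μ = ∏ i ∈ s, ∫ ω, f i (X i ω) ∂μ := by
  have h := (hX.precomp Subtype.val_injective (g := ((↑) : s → ℕ))).integral_fun_prod_comp
    (fun i ↦ mX i) (fun i ↦ hf i)
  simp only [Finset.prod_coe_sort s fun i ↦ ∫ ω, f i (X i ω) ∂μ] at h
  rw [← h]
  congr with ω
  exact (Finset.prod_coe_sort s fun i ↦ f i (X i ω)).symm

lemma iIndepFun.tendsto_prod_range_integral {F : Ω → 𝕜} (hX : iIndepFun X μ)
    (mX : ∀ i, AEMeasurable (X i) μ) (hf : ∀ i, AEStronglyMeasurable (f i) (μ.map (X i)))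
    (hf_le : ∀ i t, ‖f i t‖ ≤ 1)
    (hF : ∀ᵐ ω ∂μ, Tendsto (fun n ↦ ∏ i ∈ range n, f i (X i ω)) atTop (𝓝 (F ω))) :
    Tendsto (fun n ↦ ∏ i ∈ range n, ∫ ω, f i (X i ω) ∂μ) atTop (𝓝 (∫ ω, F ω ∂μ)) := by
  have := hX.isProbabilityMeasure
  simp_rw [← hX.integral_finset_prod_comp mX hf]
  refine tendsto_integral_of_dominated_convergence 1
    (fun n ↦ Finset.aestronglyMeasurable_fun_prod _ fun i _ ↦ (hf i).comp_aemeasurable (mX i))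
    (integrable_const 1) (fun n ↦ ae_of_all _ fun ω ↦ ?_) hF
  rw [norm_prod]
  exact Finset.prod_le_one (fun i _ ↦ norm_nonneg _) fun i _ ↦ hf_le i _

end Independence

end ProbabilityTheory

theorem gaussian_kernel_embedding_eval_general
    {H : Type*} [NormedAddCommGroup H] [InnerProductSpace ℝ H]
    [MeasurableSpace H] [BorelSpace H]
    (b : HilbertBasis ℕ ℝ H) (m : H) (ev : ℕ → ℝ≥0)
    (hev : Summable fun i => (ev i : ℝ))
    (μ : Measure H)
    (hGauss : ∀ i, Measure.map (fun x => (inner ℝ x (b i) : ℝ)) μ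
        = gaussianReal (inner ℝ m (b i)) (ev i))
    (hIndep : iIndepFun
        (fun i => fun x : H => (inner ℝ x (b i) : ℝ)) μ)
    (σ : ℝ) (hσ : 0 < σ) (y : H) :
    ∫ x, Real.exp (-σ * ‖x - y‖ ^ 2) ∂μ
      = (∏' i, ((1 : ℝ) + 2 * σ * (ev i : ℝ)) ^ (-(1 : ℝ) / 2))
          * Real.exp (-σ * ∑' i, (inner ℝ (m - y) (b i) : ℝ) ^ 2
              / (1 + 2 * σ * (ev i : ℝ))) := by
  have hw : ∀ i, 1 ≤ 1 + 2 * σ * (ev i : ℝ) := fun i ↦ le_add_of_nonneg_right (by positivity)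
  have hcoord : ∀ i, Continuous fun x : H ↦ inner ℝ x (b i) := fun i ↦ by fun_prop
  have hfactor : ∀ i, ∫ x, exp (-σ * (inner ℝ x (b i) - inner ℝ y (b i)) ^ 2) ∂μ
      = (1 + 2 * σ * (ev i : ℝ)) ^ (-(1 : ℝ) / 2)
          * exp (-σ * inner ℝ (m - y) (b i) ^ 2 / (1 + 2 * σ * (ev i : ℝ))) := fun i ↦ by
    rw [inner_sub_left, ← integral_exp_neg_mul_sq_sub_gaussianReal _ _ (by linarith [hw i]),
      ← hGauss i, integral_map (hcoord i).aemeasurable (by fun_prop)]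
  have hlhs := hIndep.tendsto_prod_range_integral
    (f := fun i t ↦ exp (-σ * (t - inner ℝ y (b i)) ^ 2)) (F := fun x ↦ exp (-σ * ‖x - y‖ ^ 2))
    (fun i ↦ (hcoord i).aemeasurable) (fun i ↦ by fun_prop)
    (fun i t ↦ by
      rw [norm_of_nonneg (exp_pos _).le, exp_le_one_iff]
      exact mul_nonpos_of_nonpos_of_nonneg (by linarith) (sq_nonneg _))
    (ae_of_all _ fun x ↦ by
      simpa only [Function.comp_def, ← inner_sub_left] using
        ((b.hasSum_inner_sq (x - y)).mul_left (-σ)).rexp.tendsto_prod_nat)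
  have hsum : Summable fun i ↦ inner ℝ (m - y) (b i) ^ 2 / (1 + 2 * σ * (ev i : ℝ)) :=
    (b.hasSum_inner_sq (m - y)).summable.of_nonneg_of_le (fun i ↦ by positivity)
      fun i ↦ div_le_self (sq_nonneg _) (hw i)
  have hrhs := (Real.multipliable_one_add_rpow (hev.mul_left (2 * σ))
    (fun i ↦ by linarith [hw i]) (-(1 : ℝ) / 2)).hasProd.mul (hsum.hasSum.mul_left (-σ)).rexp
  simp only [hfactor] at hlhs
  simp only [Function.comp_def, ← mul_div_assoc] at hrhs
  exact tendsto_nhds_unique hlhs hrhs.tendsto_prod_nat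

/-- Gaussian-kernel mean embedding of `N(m, Σ)` in a separable Hilbert space:
if `Y` is Gaussian with mean `m` and covariance diagonalized in the orthonormal
basis `b` with eigenvalues `ev` (i.e. the coordinates `⟨Y, b i⟩` are independent
`N(⟨m, b i⟩, ev i)`), then for every `y`,
`E exp(−σ‖Y − y‖²) = ∏ᵢ (1 + 2σ λᵢ)^{−1/2} · exp(−σ Σᵢ ⟨m − y, Ψᵢ⟩²/(1 + 2σλᵢ))`. -/
theorem gaussian_kernel_embedding_eval
    {H : Type*} [NormedAddCommGroup H] [InnerProductSpace ℝ H] [CompleteSpace H]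
    [MeasurableSpace H] [BorelSpace H]
    (b : HilbertBasis ℕ ℝ H) (m : H) (ev : ℕ → ℝ≥0)
    (hev : Summable fun i => (ev i : ℝ))
    (μ : Measure H) [IsProbabilityMeasure μ]
    (hGauss : ∀ i, Measure.map (fun x => (inner ℝ x (b i) : ℝ)) μ
        = gaussianReal (inner ℝ m (b i)) (ev i))
    (hIndep : iIndepFun
        (fun i => fun x : H => (inner ℝ x (b i) : ℝ)) μ)
    (σ : ℝ) (hσ : 0 < σ) (y : H) :
    ∫ x, Real.exp (-σ * ‖x - y‖ ^ 2) ∂μ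
      = (∏' i, ((1 : ℝ) + 2 * σ * (ev i : ℝ)) ^ (-(1 : ℝ) / 2))
          * Real.exp (-σ * ∑' i, (inner ℝ (m - y) (b i) : ℝ) ^ 2
              / (1 + 2 * σ * (ev i : ℝ))) :=
  gaussian_kernel_embedding_eval_general b m ev hev μ hGauss hIndep σ hσ y
end

section
/- Let Y, Y' be i.i.d. Gaussian random variables in a separable Hilbert space H with mean m = 0 and trace-class covariance Σ whose largest eigenvalue λ_1 satisfies λ_1 < 1. Then E exp(⟨Y, Y'⟩) = Π_{i≥1}(1 − λ_i²)^{−1/2} = |I − Σ²|^{−1/2}, and this quantity is finite and positive. -/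
/-!
In the eigenbasis `b` the coordinates `Yᵢ = ⟪Y, b i⟫` are independent `N(0, λᵢ)`. For fixed `x`,
`⟪x, Y'⟫ = ∑ xᵢ Y'ᵢ` is therefore centred Gaussian with variance `∑ λᵢ xᵢ²`, so the inner integral
is `exp (∑ λᵢ xᵢ² / 2)`; integrating over `x` then factorises into the one-dimensional integrals
`E exp (λᵢ Yᵢ² / 2) = (1 - λᵢ²)^(-1/2)`, a Gaussian integral against a tilted Gaussian density.
Both passages from finitely many coordinates to the whole series are dominated convergence, with
dominating function `exp (‖x‖² / 2) exp (‖y‖² / 2)`; it is integrable because, by monotone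
convergence, `E exp (‖Y‖² / 2) ≤ ∏ (1 - λᵢ)^(-1/2) < ∞`.
-/

open MeasureTheory ProbabilityTheory Real Filter Topology
open scoped ENNReal NNReal InnerProductSpace

lemma multipliable_one_sub_rpow {ι : Type*} {a : ι → ℝ} (ha : Summable a) (ha_lt : ∀ i, a i < 1)
    (r : ℝ) : Multipliable fun i => (1 - a i) ^ r := by
  refine multipliable_of_summable_log (fun i => rpow_pos_of_pos (sub_pos.2 (ha_lt i)) r) ?_
  simp_rw [log_rpow (sub_pos.2 (ha_lt _)), sub_eq_add_neg]
  exact (summable_log_one_add_of_summable ha.neg).mul_left r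

lemma one_le_one_sub_rpow {a r : ℝ} (ha : 0 ≤ a) (ha_lt : a < 1) (hr : r ≤ 0) :
    1 ≤ (1 - a) ^ r :=
  one_le_rpow_of_pos_of_le_one_of_nonpos (sub_pos.2 ha_lt) (by linarith) hr

namespace ProbabilityTheory

lemma gaussianPDFReal_mul_exp_mul_sq {v : ℝ≥0} (hv : v ≠ 0) {c : ℝ} (hc : 2 * c * v < 1)
    (x : ℝ) :
    gaussianPDFReal 0 v x * exp (c * x ^ 2)
      = (1 - 2 * c * v) ^ (-(1 : ℝ) / 2)
        * gaussianPDFReal 0 (v / (1 - 2 * c * v).toNNReal) x := by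
  have hv' : (0 : ℝ) < v := by positivity
  have hw : ((v / (1 - 2 * c * v).toNNReal : ℝ≥0) : ℝ) = v / (1 - 2 * c * v) := by
    rw [NNReal.coe_div, Real.coe_toNNReal _ (sub_pos.2 hc).le]
  simp only [gaussianPDFReal, hw, sub_zero]
  obtain ⟨t, ht, htc⟩ : ∃ t, 0 < t ∧ 1 - 2 * c * v = t := ⟨_, sub_pos.2 hc, rfl⟩
  have hc' : c = (1 - t) / (2 * v) := by rw [← htc]; field_simp; ring
  have hroot : 0 < √t := sqrt_pos.2 ht
  rw [htc, neg_div (2 : ℝ) 1, rpow_neg ht.le, ← sqrt_eq_rpow, ← mul_div_assoc,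
    sqrt_div' _ ht.le, hc', mul_assoc, ← exp_add]
  field_simp
  ring_nf

lemma lintegral_exp_mul_sq_gaussianReal {v : ℝ≥0} {c : ℝ} (hc : 2 * c * v < 1) :
    ∫⁻ x, ENNReal.ofReal (exp (c * x ^ 2)) ∂gaussianReal 0 v
      = ENNReal.ofReal ((1 - 2 * c * v) ^ (-(1 : ℝ) / 2)) := by
  rcases eq_or_ne v 0 with rfl | hv
  · simp [lintegral_dirac]
  have hw : v / (1 - 2 * c * v).toNNReal ≠ 0 := by simpa [hv] using hc
  have htilt (x : ℝ) : gaussianPDF 0 v x * ENNReal.ofReal (exp (c * x ^ 2))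
      = ENNReal.ofReal ((1 - 2 * c * v) ^ (-(1 : ℝ) / 2))
        * gaussianPDF 0 (v / (1 - 2 * c * v).toNNReal) x := by
    rw [gaussianPDF, gaussianPDF, ← ENNReal.ofReal_mul (gaussianPDFReal_nonneg _ _ _),
      ← ENNReal.ofReal_mul (rpow_nonneg (sub_pos.2 hc).le _), gaussianPDFReal_mul_exp_mul_sq hv hc]
  rw [gaussianReal_of_var_ne_zero _ hv,
    lintegral_withDensity_eq_lintegral_mul _ (measurable_gaussianPDF 0 v) (by fun_prop)]
  simp_rw [Pi.mul_apply, htilt]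
  rw [lintegral_const_mul _ (measurable_gaussianPDF _ _), lintegral_gaussianPDF_eq_one _ hw,
    mul_one]

variable {Ω ι : Type*} [MeasurableSpace Ω] {μ : Measure Ω} {X : ι → Ω → ℝ}

lemma iIndepFun.lintegral_exp_sum_comp (hX : iIndepFun X μ) (hXm : ∀ i, Measurable (X i))
    {f : ι → ℝ → ℝ} (hf : ∀ i, Measurable (f i)) (s : Finset ι) :
    ∫⁻ ω, ENNReal.ofReal (exp (∑ i ∈ s, f i (X i ω))) ∂μ
      = ∏ i ∈ s, ∫⁻ ω, ENNReal.ofReal (exp (f i (X i ω))) ∂μ := by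
  simp_rw [exp_sum, ENNReal.ofReal_prod_of_nonneg fun i _ => (exp_pos _).le]
  exact lintegral_prod_eq_prod_lintegral_of_indepFun s _
    (hX.comp (fun i t => ENNReal.ofReal (exp (f i t))) fun i => by fun_prop)
    fun i => by fun_prop

lemma iIndepFun.integral_exp_sum_comp (hX : iIndepFun X μ) (hXm : ∀ i, Measurable (X i))
    {f : ι → ℝ → ℝ} (hf : ∀ i, Measurable (f i)) (s : Finset ι) :
    ∫ ω, exp (∑ i ∈ s, f i (X i ω)) ∂μ = ∏ i ∈ s, ∫ ω, exp (f i (X i ω)) ∂μ := by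
  have h := (hX.precomp (g := ((↑) : s → ι)) Subtype.val_injective).integral_fun_prod_comp
    (X := fun i : s => X i) (f := fun i t => exp (f i t)) (fun i => (hXm i).aemeasurable)
    fun i => by fun_prop
  rw [← Finset.prod_coe_sort s]
  simpa only [exp_sum, ← Finset.prod_coe_sort s] using h

variable {v : ι → ℝ≥0}

lemma iIndepFun.integral_exp_sum_mul_gaussianReal (hX : iIndepFun X μ)
    (hXm : ∀ i, Measurable (X i)) (hlaw : ∀ i, μ.map (X i) = gaussianReal 0 (v i))
    (a : ι → ℝ) (s : Finset ι) :
    ∫ ω, exp (∑ i ∈ s, a i * X i ω) ∂μ = exp (∑ i ∈ s, v i * a i ^ 2 / 2) := by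
  rw [hX.integral_exp_sum_comp hXm (f := fun i t => a i * t) fun i => by fun_prop, exp_sum]
  refine Finset.prod_congr rfl fun i _ => ?_
  simpa [mgf] using mgf_gaussianReal (hlaw i) (a i)

lemma iIndepFun.lintegral_exp_sum_mul_sq_gaussianReal (hX : iIndepFun X μ)
    (hXm : ∀ i, Measurable (X i)) (hlaw : ∀ i, μ.map (X i) = gaussianReal 0 (v i))
    {c : ι → ℝ} (hc : ∀ i, 2 * c i * v i < 1) (s : Finset ι) :
    ∫⁻ ω, ENNReal.ofReal (exp (∑ i ∈ s, c i * X i ω ^ 2)) ∂μ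
      = ENNReal.ofReal (∏ i ∈ s, (1 - 2 * c i * v i) ^ (-(1 : ℝ) / 2)) := by
  rw [hX.lintegral_exp_sum_comp hXm (f := fun i t => c i * t ^ 2) fun i => by fun_prop,
    ENNReal.ofReal_prod_of_nonneg fun i _ => rpow_nonneg (sub_pos.2 (hc i)).le _]
  refine Finset.prod_congr rfl fun i _ => ?_
  rw [← lintegral_map (f := fun t => ENNReal.ofReal (exp (c i * t ^ 2))) (by fun_prop) (hXm i),
    hlaw i, lintegral_exp_mul_sq_gaussianReal (hc i)]

lemma iIndepFun.integral_exp_sum_mul_sq_gaussianReal (hX : iIndepFun X μ)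
    (hXm : ∀ i, Measurable (X i)) (hlaw : ∀ i, μ.map (X i) = gaussianReal 0 (v i))
    {c : ι → ℝ} (hc : ∀ i, 2 * c i * v i < 1) (s : Finset ι) :
    ∫ ω, exp (∑ i ∈ s, c i * X i ω ^ 2) ∂μ = ∏ i ∈ s, (1 - 2 * c i * v i) ^ (-(1 : ℝ) / 2) := by
  rw [integral_eq_lintegral_of_nonneg_ae (ae_of_all _ fun _ => (exp_pos _).le) (by fun_prop),
    hX.lintegral_exp_sum_mul_sq_gaussianReal hXm hlaw hc,
    ENNReal.toReal_ofReal (Finset.prod_nonneg fun i _ => rpow_nonneg (sub_pos.2 (hc i)).le _)]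

end ProbabilityTheory

namespace HilbertBasis

variable {H ι : Type*} [NormedAddCommGroup H] [InnerProductSpace ℝ H] (b : HilbertBasis ι ℝ H)

lemma hasSum_real_inner_mul_inner (x y : H) :
    HasSum (fun i => ⟪x, b i⟫_ℝ * ⟪y, b i⟫_ℝ) ⟪x, y⟫_ℝ := by
  simpa only [real_inner_comm (b _) y] using b.hasSum_inner_mul_inner x y

lemma hasSum_real_inner_sq (x : H) : HasSum (fun i => ⟪x, b i⟫_ℝ ^ 2) (‖x‖ ^ 2) := by
  simpa only [← sq, real_inner_self_eq_norm_sq] using b.hasSum_real_inner_mul_inner x x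

lemma summable_mul_real_inner_sq {w : ι → ℝ} {C : ℝ} (hw : ∀ i, |w i| ≤ C) (x : H) :
    Summable fun i => w i * ⟪x, b i⟫_ℝ ^ 2 :=
  ((b.hasSum_real_inner_sq x).summable.mul_left C).of_norm_bounded fun i => by
    rw [norm_mul, norm_pow, Real.norm_eq_abs, Real.norm_eq_abs, sq_abs]
    gcongr
    exact hw i

lemma sum_real_inner_mul_inner_le (x y : H) (s : Finset ι) :
    ∑ i ∈ s, ⟪x, b i⟫_ℝ * ⟪y, b i⟫_ℝ ≤ (‖x‖ ^ 2 + ‖y‖ ^ 2) / 2 :=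
  calc ∑ i ∈ s, ⟪x, b i⟫_ℝ * ⟪y, b i⟫_ℝ
      ≤ ∑ i ∈ s, (⟪x, b i⟫_ℝ ^ 2 + ⟪y, b i⟫_ℝ ^ 2) / 2 :=
        Finset.sum_le_sum fun i _ => by linarith [two_mul_le_add_sq ⟪x, b i⟫_ℝ ⟪y, b i⟫_ℝ]
    _ = (∑ i ∈ s, ⟪x, b i⟫_ℝ ^ 2 + ∑ i ∈ s, ⟪y, b i⟫_ℝ ^ 2) / 2 := by
        rw [← Finset.sum_div, Finset.sum_add_distrib]
    _ ≤ (‖x‖ ^ 2 + ‖y‖ ^ 2) / 2 := by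
        gcongr <;> exact sum_le_hasSum s (fun i _ => sq_nonneg _) (b.hasSum_real_inner_sq _)

variable [MeasurableSpace H] [BorelSpace H] [Countable ι] {μ : Measure H} {ev : ι → ℝ≥0}

lemma integrable_exp_norm_sq_div_two (hev : Summable fun i => (ev i : ℝ))
    (hev_lt : ∀ i, (ev i : ℝ) < 1)
    (hlaw : ∀ i, μ.map (fun x => ⟪x, b i⟫_ℝ) = gaussianReal 0 (ev i))
    (hindep : iIndepFun (fun i x => ⟪x, b i⟫_ℝ) μ) :
    Integrable (fun x => exp (‖x‖ ^ 2 / 2)) μ := by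
  classical
  have hc (i : ι) : 2 * (1 / 2 : ℝ) * ev i < 1 := by simpa using hev_lt i
  set f : ι → ℝ := fun i => (1 - 2 * (1 / 2 : ℝ) * ev i) ^ (-(1 : ℝ) / 2) with hf
  have hf_one (i : ι) : 1 ≤ f i :=
    one_le_one_sub_rpow (by positivity) (hc i) (by norm_num)
  have hf_mono : Monotone fun s : Finset ι => ∏ i ∈ s, f i := fun s t hst =>
    Finset.prod_le_prod_of_subset_of_one_le hst (fun i _ => zero_le_one.trans (hf_one i))
      fun i _ _ => hf_one i
  have hf_mult : Multipliable f := multipliable_one_sub_rpow (hev.mul_left _) hc _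
  set F : Finset ι → H → ℝ≥0∞ :=
    fun s x => ENNReal.ofReal (exp (∑ i ∈ s, 1 / 2 * ⟪x, b i⟫_ℝ ^ 2)) with hF
  have hF_mono : Monotone F := fun s t hst x =>
    ENNReal.ofReal_le_ofReal <| exp_le_exp.2 <|
      Finset.sum_le_sum_of_subset_of_nonneg hst fun _ _ _ => by positivity
  have hF_sup (x : H) : ⨆ s, F s x = ENNReal.ofReal (exp (‖x‖ ^ 2 / 2)) := by
    refine iSup_eq_of_tendsto (fun s t hst => hF_mono hst x) ?_
    have := (b.hasSum_real_inner_sq x).mul_left (1 / 2)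
    rw [one_div_mul_eq_div] at this
    exact ((ENNReal.continuous_ofReal.comp continuous_exp).tendsto _).comp this
  refine ⟨by fun_prop, (hasFiniteIntegral_iff_ofReal (ae_of_all _ fun _ => (exp_pos _).le)).2 ?_⟩
  calc ∫⁻ x, ENNReal.ofReal (exp (‖x‖ ^ 2 / 2)) ∂μ
      = ⨆ s, ∫⁻ x, F s x ∂μ := by
        simp_rw [← hF_sup]
        exact lintegral_iSup_directed (fun s => by fun_prop) hF_mono.directed_le
    _ = ⨆ s, ENNReal.ofReal (∏ i ∈ s, f i) := by
        simp_rw [hF, hf, hindep.lintegral_exp_sum_mul_sq_gaussianReal (by fun_prop) hlaw hc]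
    _ ≤ ENNReal.ofReal (∏' i, f i) :=
        iSup_le fun s => ENNReal.ofReal_le_ofReal (hf_mono.ge_of_tendsto hf_mult.hasProd s)
    _ < ⊤ := ENNReal.ofReal_lt_top

lemma integral_exp_real_inner (hev_lt : ∀ i, (ev i : ℝ) < 1)
    (hlaw : ∀ i, μ.map (fun x => ⟪x, b i⟫_ℝ) = gaussianReal 0 (ev i))
    (hindep : iIndepFun (fun i x => ⟪x, b i⟫_ℝ) μ)
    (hint : Integrable (fun x => exp (‖x‖ ^ 2 / 2)) μ) (x : H) :
    ∫ y, exp ⟪x, y⟫_ℝ ∂μ = exp (∑' i, ev i * ⟪x, b i⟫_ℝ ^ 2 / 2) := by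
  have hsum : Summable fun i => (ev i : ℝ) * ⟪x, b i⟫_ℝ ^ 2 / 2 :=
    (b.summable_mul_real_inner_sq (fun i => (abs_of_nonneg (ev i).2).trans_le (hev_lt i).le)
      x).div_const 2
  have hlim : Tendsto (fun s : Finset ι => ∫ y, exp (∑ i ∈ s, ⟪x, b i⟫_ℝ * ⟪y, b i⟫_ℝ) ∂μ)
      atTop (𝓝 (∫ y, exp ⟪x, y⟫_ℝ ∂μ)) := by
    refine tendsto_integral_filter_of_dominated_convergence
      (fun y => exp (‖x‖ ^ 2 / 2) * exp (‖y‖ ^ 2 / 2)) (.of_forall fun s => by fun_prop)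
      (.of_forall fun s => ae_of_all _ fun y => ?_) (hint.const_mul _)
      (ae_of_all _ fun y => (continuous_exp.tendsto _).comp (b.hasSum_real_inner_mul_inner x y))
    rw [norm_of_nonneg (exp_pos _).le, ← exp_add, exp_le_exp]
    linarith [b.sum_real_inner_mul_inner_le x y s]
  refine tendsto_nhds_unique hlim ?_
  simp_rw [hindep.integral_exp_sum_mul_gaussianReal (by fun_prop) hlaw]
  exact (continuous_exp.tendsto _).comp hsum.hasSum

lemma hasProd_integral_exp_tsum_mul_real_inner_sq (hev_lt : ∀ i, (ev i : ℝ) < 1)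
    (hlaw : ∀ i, μ.map (fun x => ⟪x, b i⟫_ℝ) = gaussianReal 0 (ev i))
    (hindep : iIndepFun (fun i x => ⟪x, b i⟫_ℝ) μ)
    (hint : Integrable (fun x => exp (‖x‖ ^ 2 / 2)) μ) :
    HasProd (fun i => (1 - (ev i : ℝ) ^ 2) ^ (-(1 : ℝ) / 2))
      (∫ x, exp (∑' i, ev i * ⟪x, b i⟫_ℝ ^ 2 / 2) ∂μ) := by
  have hev_le (i : ι) : |(ev i : ℝ)| ≤ 1 := (abs_of_nonneg (ev i).2).trans_le (hev_lt i).le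
  have hc (i : ι) : 2 * ((ev i : ℝ) / 2) * ev i < 1 := by nlinarith [(ev i).2, hev_lt i]
  have hfin (s : Finset ι) : ∫ x, exp (∑ i ∈ s, ev i * ⟪x, b i⟫_ℝ ^ 2 / 2) ∂μ
      = ∏ i ∈ s, (1 - (ev i : ℝ) ^ 2) ^ (-(1 : ℝ) / 2) := by
    simp_rw [mul_div_right_comm _ _ (2 : ℝ)]
    rw [hindep.integral_exp_sum_mul_sq_gaussianReal (by fun_prop) hlaw hc]
    exact Finset.prod_congr rfl fun i _ => by ring_nf
  change Tendsto _ atTop _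
  simp_rw [← hfin]
  refine tendsto_integral_filter_of_dominated_convergence (fun x => exp (‖x‖ ^ 2 / 2))
    (.of_forall fun s => by fun_prop) (.of_forall fun s => ae_of_all _ fun x => ?_) hint
    (ae_of_all _ fun x => (continuous_exp.tendsto _).comp
      ((b.summable_mul_real_inner_sq hev_le x).div_const 2).hasSum)
  rw [norm_of_nonneg (exp_pos _).le, exp_le_exp]
  calc ∑ i ∈ s, (ev i : ℝ) * ⟪x, b i⟫_ℝ ^ 2 / 2 ≤ ∑ i ∈ s, ⟪x, b i⟫_ℝ ^ 2 / 2 :=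
        Finset.sum_le_sum fun i _ => by
          gcongr
          exact mul_le_of_le_one_left (sq_nonneg _) (hev_lt i).le
    _ ≤ ‖x‖ ^ 2 / 2 := by
        rw [← Finset.sum_div]
        gcongr
        exact sum_le_hasSum s (fun i _ => sq_nonneg _) (b.hasSum_real_inner_sq x)

end HilbertBasis

theorem gaussian_exponential_kernel_embedding_norm_sq_general
    {H : Type*} [NormedAddCommGroup H] [InnerProductSpace ℝ H]
    [MeasurableSpace H] [BorelSpace H]
    (b : HilbertBasis ℕ ℝ H) (ev : ℕ → ℝ≥0)
    (hev : Summable fun i => (ev i : ℝ))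
    (hmono : ∀ i, ev i ≤ ev 0) (htop : (ev 0 : ℝ) < 1)
    (μ : Measure H)
    (hGauss : ∀ i, Measure.map (fun x => (inner ℝ x (b i) : ℝ)) μ
        = gaussianReal 0 (ev i))
    (hIndep : iIndepFun
        (fun i => fun x : H => (inner ℝ x (b i) : ℝ)) μ) :
    (∫ x, ∫ x', Real.exp (inner ℝ x x' : ℝ) ∂μ ∂μ
        = ∏' i, ((1 : ℝ) - (ev i : ℝ) ^ 2) ^ (-(1 : ℝ) / 2))
      ∧ Multipliable (fun i => ((1 : ℝ) - (ev i : ℝ) ^ 2) ^ (-(1 : ℝ) / 2))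
      ∧ 0 < ∏' i, ((1 : ℝ) - (ev i : ℝ) ^ 2) ^ (-(1 : ℝ) / 2) := by
  have hev_lt (i : ℕ) : (ev i : ℝ) < 1 := (NNReal.coe_le_coe.2 (hmono i)).trans_lt htop
  have hint := b.integrable_exp_norm_sq_div_two hev hev_lt hGauss hIndep
  have hprod := b.hasProd_integral_exp_tsum_mul_real_inner_sq hev_lt hGauss hIndep hint
  simp_rw [← b.integral_exp_real_inner hev_lt hGauss hIndep hint] at hprod
  have hf_one (i : ℕ) : 1 ≤ (1 - (ev i : ℝ) ^ 2) ^ (-(1 : ℝ) / 2) :=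
    one_le_one_sub_rpow (sq_nonneg _) (pow_lt_one₀ (ev i).2 (hev_lt i) two_ne_zero) (by norm_num)
  refine ⟨hprod.tprod_eq.symm, hprod.multipliable, ?_⟩
  rw [hprod.tprod_eq]
  exact zero_lt_one.trans_le (ge_of_tendsto' hprod fun s => Finset.one_le_prod fun i _ => hf_one i)

/-- Exponential-kernel norm of the embedding of `N(0, Σ)`: if `Y, Y'` are i.i.d.
centered Gaussian in `H`, with covariance diagonalized in the basis `b` with
summable eigenvalues `ev` satisfying `ev i ≤ ev 0 < 1`, then
`E exp(⟨Y, Y'⟩) = ∏ᵢ (1 − λᵢ²)^{−1/2}`, a finite and positive quantity. -/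
theorem gaussian_exponential_kernel_embedding_norm_sq
    {H : Type*} [NormedAddCommGroup H] [InnerProductSpace ℝ H] [CompleteSpace H]
    [MeasurableSpace H] [BorelSpace H]
    (b : HilbertBasis ℕ ℝ H) (ev : ℕ → ℝ≥0)
    (hev : Summable fun i => (ev i : ℝ))
    (hmono : ∀ i, ev i ≤ ev 0) (htop : (ev 0 : ℝ) < 1)
    (μ : Measure H) [IsProbabilityMeasure μ]
    (hGauss : ∀ i, Measure.map (fun x => (inner ℝ x (b i) : ℝ)) μ
        = gaussianReal 0 (ev i))
    (hIndep : iIndepFun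
        (fun i => fun x : H => (inner ℝ x (b i) : ℝ)) μ) :
    (∫ x, ∫ x', Real.exp (inner ℝ x x' : ℝ) ∂μ ∂μ
        = ∏' i, ((1 : ℝ) - (ev i : ℝ) ^ 2) ^ (-(1 : ℝ) / 2))
      ∧ Multipliable (fun i => ((1 : ℝ) - (ev i : ℝ) ^ 2) ^ (-(1 : ℝ) / 2))
      ∧ 0 < ∏' i, ((1 : ℝ) - (ev i : ℝ) ^ 2) ^ (-(1 : ℝ) / 2) :=
  gaussian_exponential_kernel_embedding_norm_sq_general b ev hev hmono htop μ hGauss hIndep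
end

section
/- Let Y₁,…,Yₙ be i.i.d. from P with E_P k̄(Y,Y) < ∞, let θ̃ₙ be estimators converging P-a.s. to θ₀, and let θ ↦ N(θ) ∈ H(k̄) be continuous at θ₀. Define Δ̂² = ‖μ̂_P − N(θ̃ₙ)‖²_{H(k̄)} and Δ² = ‖μ_P − N(θ₀)‖²_{H(k̄)}. Then Δ̂² → Δ² P-almost surely as n → ∞. -/
/-!
Since `‖φ y‖² = ⟪φ y, φ y⟫` is `P`-integrable, the feature map is Bochner integrable and the
embedding `μP` is its Bochner mean. Etemadi's strong law in the Hilbert space `K` then gives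
`μ̂_P → μP` almost surely, while `N (θ̃ₙ) → N θ₀` on the almost sure event where `θ̃ₙ → θ₀`;
the squared norm is continuous.
-/

open MeasureTheory ProbabilityTheory Filter
open scoped Topology

section MeanEmbedding

variable {H K : Type*} [MeasurableSpace H] [NormedAddCommGroup K] [InnerProductSpace ℝ K]
  {P : Measure H} {φ : H → K}

theorem integrable_of_integrable_inner_self [IsFiniteMeasure P] (hφ : AEStronglyMeasurable φ P)
    (hint : Integrable (fun y => (inner ℝ (φ y) (φ y) : ℝ)) P) : Integrable φ P :=
  ((memLp_two_iff_integrable_sq_norm hφ).2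
    (by simpa only [real_inner_self_eq_norm_sq] using hint)).integrable one_le_two

theorem eq_integral_of_inner_eq_integral_inner [CompleteSpace K] (hφ : Integrable φ P) {μ : K}
    (hμ : ∀ f : K, (inner ℝ μ f : ℝ) = ∫ y, (inner ℝ f (φ y) : ℝ) ∂P) : μ = ∫ y, φ y ∂P :=
  ext_inner_right ℝ fun f => by rw [hμ f, integral_inner hφ, real_inner_comm]

end MeanEmbedding

theorem strong_law_ae_comp {Ω H E : Type*} {mΩ : MeasurableSpace Ω} {μ : Measure Ω}
    [MeasurableSpace H] [NormedAddCommGroup E] [NormedSpace ℝ E] [CompleteSpace E]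
    [MeasurableSpace E] [BorelSpace E] {P : Measure H} {Y : ℕ → Ω → H}
    (hY : ∀ i, Measurable (Y i)) (hlaw : ∀ i, μ.map (Y i) = P)
    (hindep : Pairwise fun i j => IndepFun (Y i) (Y j) μ)
    {φ : H → E} (hφ : Measurable φ) (hint : Integrable φ P) :
    ∀ᵐ ω ∂μ, Tendsto (fun n : ℕ => (n : ℝ)⁻¹ • ∑ i ∈ Finset.range n, φ (Y i ω))
      atTop (𝓝 (∫ y, φ y ∂P)) := by
  have hident : ∀ i, IdentDistrib (Y i) (Y 0) μ μ := fun i =>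
    ⟨(hY i).aemeasurable, (hY 0).aemeasurable, by rw [hlaw i, hlaw 0]⟩
  have hφY₀ : IdentDistrib (φ ∘ Y 0) φ μ P :=
    IdentDistrib.comp (g := id)
      ⟨(hY 0).aemeasurable, aemeasurable_id, by rw [hlaw 0]; exact Measure.map_id.symm⟩ hφ
  rw [← hφY₀.integral_eq]
  exact strong_law_ae (fun i => φ ∘ Y i) (hφY₀.integrable_iff.2 hint)
    (fun i j hij => (hindep hij).comp hφ hφ) fun i => (hident i).comp hφ

theorem test_statistic_consistent_general
    {Ω : Type*} [MeasureSpace Ω]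
    {H K : Type*} [MeasurableSpace H]
    [NormedAddCommGroup K] [InnerProductSpace ℝ K] [CompleteSpace K]
    [MeasurableSpace K] [BorelSpace K] [SecondCountableTopology K]
    {Θ : Type*} [MetricSpace Θ]
    (φ : H → K) (hφ : Measurable φ)
    (P : Measure H) [IsProbabilityMeasure P]
    (hint : Integrable (fun y => (inner ℝ (φ y) (φ y) : ℝ)) P)
    (Y : ℕ → Ω → H) (hmeas : ∀ i, Measurable (Y i))
    (hlaw : ∀ i, Measure.map (Y i) ℙ = P)
    (hIndep : iIndepFun Y ℙ)
    (μP : K)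
    (hμP : ∀ f : K, (inner ℝ μP f : ℝ) = ∫ y, (inner ℝ f (φ y) : ℝ) ∂P)
    (θtil : ℕ → Ω → Θ) (θ₀ : Θ)
    (hθ : ∀ᵐ ω, Tendsto (fun n => θtil n ω) atTop (𝓝 θ₀))
    (N : Θ → K) (hN : ContinuousAt N θ₀) :
    ∀ᵐ ω, Tendsto
      (fun n : ℕ =>
        ‖(n : ℝ)⁻¹ • ∑ i ∈ Finset.range n, φ (Y i ω) - N (θtil n ω)‖ ^ 2)
      atTop (𝓝 (‖μP - N θ₀‖ ^ 2)) := by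
  have hφint : Integrable φ P := integrable_of_integrable_inner_self hφ.aestronglyMeasurable hint
  have hslln := strong_law_ae_comp hmeas hlaw (fun i j hij => hIndep.indepFun hij) hφ hφint
  rw [← eq_integral_of_inner_eq_integral_inner hφint hμP] at hslln
  filter_upwards [hslln, hθ] with ω hmean hest
  exact ((hmean.sub (hN.tendsto.comp hest)).norm).pow 2

/-- Consistency of the test statistic `Δ̂² = ‖μ̂_P − N(θ̃ₙ)‖²`: if the sample is
i.i.d. from `P` with `E k̄(Y,Y) < ∞` (kernel modeled by its feature map `φ` into
the RKHS `K`), the estimators `θ̃ₙ` converge a.s. to `θ₀`, and `θ ↦ N(θ)` is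
continuous at `θ₀`, then `Δ̂² → Δ² = ‖μ_P − N(θ₀)‖²` almost surely. -/
theorem test_statistic_consistent
    {Ω : Type*} [MeasureSpace Ω] [IsProbabilityMeasure (ℙ : Measure Ω)]
    {H K : Type*} [MeasurableSpace H]
    [NormedAddCommGroup K] [InnerProductSpace ℝ K] [CompleteSpace K]
    [MeasurableSpace K] [BorelSpace K] [SecondCountableTopology K]
    {Θ : Type*} [MetricSpace Θ]
    (φ : H → K) (hφ : Measurable φ)
    (P : Measure H) [IsProbabilityMeasure P]
    (hint : Integrable (fun y => (inner ℝ (φ y) (φ y) : ℝ)) P)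
    (Y : ℕ → Ω → H) (hmeas : ∀ i, Measurable (Y i))
    (hlaw : ∀ i, Measure.map (Y i) ℙ = P)
    (hIndep : iIndepFun Y ℙ)
    (μP : K)
    (hμP : ∀ f : K, (inner ℝ μP f : ℝ) = ∫ y, (inner ℝ f (φ y) : ℝ) ∂P)
    (θtil : ℕ → Ω → Θ) (θ₀ : Θ)
    (hθ : ∀ᵐ ω, Tendsto (fun n => θtil n ω) atTop (𝓝 θ₀))
    (N : Θ → K) (hN : ContinuousAt N θ₀) :
    ∀ᵐ ω, Tendsto
      (fun n : ℕ =>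
        ‖(n : ℝ)⁻¹ • ∑ i ∈ Finset.range n, φ (Y i ω) - N (θtil n ω)‖ ^ 2)
      atTop (𝓝 (‖μP - N θ₀‖ ^ 2)) :=
  test_statistic_consistent_general φ hφ P hint Y hmeas hlaw hIndep μP hμP θtil θ₀ hθ N hN
end
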